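/- Let q = n + 1 be a prime power with q ≥ 3, and let α be a normal element of F_{q^n} over F_q. Then there are no (α, 2)-sociable elements of F_{q^n}. -/

import Mathlib

/-!
Let `c` generate `F_q^×` and let `φ` be the `q`-Frobenius of `F_{q^n}`, so that `φ ^ n = 1 = c ^ n`
(this is where `n = q - 1` enters). The `F_q`-linear map `S = ∑_{i<n} c^(n-1-i) φ^i` satisfies
`φ ∘ S = c • S = S ∘ φ`, and it kills no normal element because its coefficient at `φ^0` is nonzero.
The `c`-eigenspace of `φ` is an `F_q`-line, so `S β = c^(-j) • S α` for some `j < n`, whence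
`S (β^(q^j) - α) = 0` and `β^(q^j) - α` is not normal.
-/

open Polynomial

variable {Fq Fqn : Type*}

/-- Frobenius action of a polynomial on a field element: `f ∘ α = Σ aᵢ α^(q^i)`. -/
noncomputable def circ [Field Fq] [Field Fqn] [Algebra Fq Fqn] (q : ℕ) (f : Fq[X]) (α : Fqn) : Fqn :=
  f.sum fun i a => algebraMap Fq Fqn a * α ^ q ^ i

/-- `α` is a normal element: its conjugates `α, α^q, …, α^(q^(n-1))` form an `Fq`-basis. -/
def IsNormal (Fq : Type*) {Fqn : Type*} [Field Fq] [Field Fqn] [Algebra Fq Fqn]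
    (q n : ℕ) (α : Fqn) : Prop :=
  LinearIndependent Fq (fun i : Fin n => α ^ q ^ (i : ℕ)) ∧
    Submodule.span Fq (Set.range fun i : Fin n => α ^ q ^ (i : ℕ)) = ⊤

/-- `A` is the annihilator of `α`: the monic polynomial of least degree with `A ∘ α = 0`. -/
def IsAnnihilator [Field Fq] [Field Fqn] [Algebra Fq Fqn] (q : ℕ) (α : Fqn) (A : Fq[X]) : Prop :=
  A.Monic ∧ circ q A α = 0 ∧ ∀ B : Fq[X], B.Monic → circ q B α = 0 → A.degree ≤ B.degree


open Finset

section EigenSum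

variable {R M : Type*} [CommRing R] [AddCommGroup M] [Module R M]

/-- The geometric sum `(T ^ n - c ^ n) / (T - c)`; when `T ^ n = 1` and `c ^ n = 1` it maps `M`
into the `c`-eigenspace of `T`. -/
def eigenSum (T : Module.End R M) (c : R) (n : ℕ) : Module.End R M :=
  ∑ i ∈ range n, T ^ i * algebraMap R (Module.End R M) c ^ (n - 1 - i)

variable {T : Module.End R M} {c : R} {n : ℕ}

lemma eigenSum_apply (x : M) :
    eigenSum T c n x = ∑ i ∈ range n, c ^ (n - 1 - i) • (T ^ i) x := by
  simp [eigenSum, LinearMap.sum_apply, ← map_pow, Module.algebraMap_end_apply]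

lemma sub_mul_eigenSum (hT : T ^ n = 1) (hc : c ^ n = 1) :
    (T - algebraMap R (Module.End R M) c) * eigenSum T c n = 0 := by
  rw [eigenSum, (Algebra.commute_algebraMap_right c T).mul_geom_sum₂, ← map_pow, hT, hc, map_one,
    sub_self]

lemma eigenSum_mul_sub (hT : T ^ n = 1) (hc : c ^ n = 1) :
    eigenSum T c n * (T - algebraMap R (Module.End R M) c) = 0 := by
  rw [eigenSum, (Algebra.commute_algebraMap_right c T).geom_sum₂_mul, ← map_pow, hT, hc, map_one,
    sub_self]

lemma apply_eigenSum (hT : T ^ n = 1) (hc : c ^ n = 1) (x : M) :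
    T (eigenSum T c n x) = c • eigenSum T c n x := by
  have := congrArg (· x) (sub_mul_eigenSum hT hc)
  simpa [sub_eq_zero, Module.algebraMap_end_apply] using this

lemma eigenSum_apply_pow (hT : T ^ n = 1) (hc : c ^ n = 1) (j : ℕ) (x : M) :
    eigenSum T c n ((T ^ j) x) = c ^ j • eigenSum T c n x := by
  have hcomm : eigenSum T c n * T = c • eigenSum T c n := by
    have := eigenSum_mul_sub hT hc
    rwa [mul_sub, sub_eq_zero, ← Algebra.commutes, ← Algebra.smul_def] at this
  induction j with
  | zero => simp
  | succ j ih =>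
    rw [pow_succ', Module.End.mul_apply, ← Module.End.mul_apply _ T, hcomm, LinearMap.smul_apply, ih,
      smul_smul, pow_succ']

end EigenSum

section FiniteField

open FiniteField

variable {K L : Type*} [Field K] [Fintype K] [Field L] [Algebra K L]

lemma frobeniusAlgHom_pow_apply (i : ℕ) (x : L) :
    ((frobeniusAlgHom K L).toLinearMap ^ i) x = x ^ Fintype.card K ^ i := by
  rw [Module.End.pow_apply, AlgHom.coe_toLinearMap, coe_frobeniusAlgHom, pow_iterate]

lemma frobeniusAlgHom_pow_finrank [Finite L] :
    (frobeniusAlgHom K L).toLinearMap ^ Module.finrank K L = 1 := by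
  have := Fintype.ofFinite L
  ext x
  rw [frobeniusAlgHom_pow_apply, ← Module.card_eq_pow_finrank, pow_card,
    Module.End.one_apply]

lemma mem_range_algebraMap_of_pow_card_eq [Finite L] {x : L} (hx : x ^ Fintype.card K = x) :
    x ∈ Set.range (algebraMap K L) := by
  rw [IsGalois.mem_range_algebraMap_iff_fixed]
  intro σ
  obtain ⟨m, rfl⟩ := (bijective_frobeniusAlgEquivOfAlgebraic_pow K L).2 σ
  rw [AlgEquiv.coe_pow, coe_frobeniusAlgEquivOfAlgebraic]
  exact Function.iterate_fixed hx _

lemma exists_eq_smul_of_pow_card_eq_smul [Finite L] {c : K} {u v : L} (hu : u ≠ 0)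
    (hcu : u ^ Fintype.card K = c • u) (hcv : v ^ Fintype.card K = c • v) :
    ∃ a : K, v = a • u := by
  have hc : c ≠ 0 := by
    rintro rfl
    simp [hu] at hcu
  obtain ⟨a, ha⟩ := mem_range_algebraMap_of_pow_card_eq (K := K) (x := v / u) <| by
    rw [div_pow, hcu, hcv, Algebra.smul_def, Algebra.smul_def,
      mul_div_mul_left _ _ ((_root_.map_ne_zero _).2 hc)]
  exact ⟨a, by rw [Algebra.smul_def, ha, div_mul_cancel₀ v hu]⟩

lemma eigenSum_frobeniusAlgHom_ne_zero {n : ℕ} (hn : 0 < n) {c : K} (hc : c ≠ 0) {γ : L}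
    (hγ : IsNormal K (Fintype.card K) n γ) :
    eigenSum (frobeniusAlgHom K L).toLinearMap c n γ ≠ 0 := by
  intro h
  simp_rw [eigenSum_apply, frobeniusAlgHom_pow_apply, ← Fin.sum_univ_eq_sum_range
    (fun i => c ^ (n - 1 - i) • γ ^ Fintype.card K ^ i)] at h
  exact pow_ne_zero _ hc (Fintype.linearIndependent_iff.mp hγ.1 _ h ⟨0, hn⟩)

end FiniteField

lemma exists_pow_mul_eq_one_of_forall_mem_zpowers {G : Type*} [Group G] [Finite G] {g : G}
    (hg : ∀ x, x ∈ Subgroup.zpowers g) (x : G) : ∃ j < Nat.card G, g ^ j * x = 1 := by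
  classical
  obtain ⟨j, hj, hgj⟩ := Finset.mem_image.1 (mem_zpowers_iff_mem_range_orderOf.1 (hg x⁻¹))
  refine ⟨j, ?_, ?_⟩
  · rwa [← orderOf_eq_card_of_forall_mem_zpowers hg, ← Finset.mem_range]
  · rw [hgj, inv_mul_cancel]

theorem stmt18_general (q n : ℕ) [Field Fq] [Fintype Fq] [Field Fqn] [Algebra Fq Fqn]
    (hcard : Fintype.card Fq = q)
    (hqn : q = n + 1) (hrank : Module.finrank Fq Fqn = n)
    (α : Fqn) (hα : IsNormal Fq q n α) :
    ¬ ∃ β : Fqn, ∀ i : ℕ, i < n →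
        IsNormal Fq q n (β ^ q ^ i) ∧ IsNormal Fq q n (β ^ q ^ i - α) := by
  subst hcard
  rintro ⟨β, hβ⟩
  have hn : 0 < n := by have := Fintype.one_lt_card (α := Fq); omega
  have : FiniteDimensional Fq Fqn := .of_finrank_pos (hrank ▸ hn)
  have : Finite Fqn := Module.finite_of_finite Fq
  have hcard_units : Nat.card Fqˣ = n := by
    rw [Nat.card_units, Nat.card_eq_fintype_card]; omega
  obtain ⟨c, hc⟩ := IsCyclic.exists_generator (α := Fqˣ)
  set T := (FiniteField.frobeniusAlgHom Fq Fqn).toLinearMap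
  have hTn : T ^ n = 1 := hrank ▸ frobeniusAlgHom_pow_finrank
  have hcn : (c : Fq) ^ n = 1 := by
    rw [← Units.val_pow_eq_pow_val, ← hcard_units, pow_card_eq_one', Units.val_one]
  have hS (γ : Fqn) (hγ : IsNormal Fq (Fintype.card Fq) n γ) : eigenSum T c n γ ≠ 0 :=
    eigenSum_frobeniusAlgHom_ne_zero hn c.ne_zero hγ
  obtain ⟨a, ha⟩ := exists_eq_smul_of_pow_card_eq_smul (hS α hα)
    (apply_eigenSum hTn hcn α) (apply_eigenSum hTn hcn β)
  have ha0 : a ≠ 0 := by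
    rintro rfl
    exact hS β (by simpa using (hβ 0 hn).1) (by rw [ha, zero_smul])
  obtain ⟨j, hj, hja⟩ := exists_pow_mul_eq_one_of_forall_mem_zpowers hc (Units.mk0 a ha0)
  replace hja : (c : Fq) ^ j * a = 1 := by simpa using congrArg Units.val hja
  apply hS _ (hβ j (hcard_units ▸ hj)).2
  rw [map_sub, ← frobeniusAlgHom_pow_apply, eigenSum_apply_pow hTn hcn, ha, smul_smul, hja,
    one_smul, sub_self]

theorem stmt18 (q n : ℕ) [Field Fq] [Fintype Fq] [Field Fqn] [Algebra Fq Fqn]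
    (hq : ∃ p k : ℕ, p.Prime ∧ 0 < k ∧ q = p ^ k) (hcard : Fintype.card Fq = q)
    (hqn : q = n + 1) (hq3 : 3 ≤ q) (hrank : Module.finrank Fq Fqn = n)
    (α : Fqn) (hα : IsNormal Fq q n α) :
    ¬ ∃ β : Fqn, ∀ i : ℕ, i < n →
        IsNormal Fq q n (β ^ q ^ i) ∧ IsNormal Fq q n (β ^ q ^ i - α) :=
  stmt18_general q n hcard hqn hrank α hα
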